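/- Every connected loop-chordal graph G is dismantlable: there is a sequence of folds reducing G to a single looped vertex. -/

import Mathlib

/-- A graph, possibly with loops: a symmetric relation on vertices. -/
structure LGraph (V : Type*) where
  Adj : V → V → Prop
  symm : ∀ {u v : V}, Adj u v → Adj v u

namespace LGraph

variable {VG VH : Type*}

/-- `G.ReachIn n x y`: there is a walk of length exactly `n` from `x` to `y`. -/
def ReachIn (G : LGraph VG) : ℕ → VG → VG → Prop
  | 0, x, y => x = y
  | n + 1, x, y => ∃ z, G.Adj x z ∧ G.ReachIn n z y

/-- `dist(A, B) ≥ g`: no walk of length `< g` connects a point of `A` to a point of `B`. -/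
def DistGe (G : LGraph VG) (A B : Set VG) (g : ℕ) : Prop :=
  ∀ x ∈ A, ∀ y ∈ B, ∀ n < g, ¬ G.ReachIn n x y

/-- A graph homomorphism from `G` to `H`. -/
def IsHom (G : LGraph VG) (H : LGraph VH) (f : VG → VH) : Prop :=
  ∀ ⦃x y : VG⦄, G.Adj x y → H.Adj (f x) (f y)

/-- `f` is a graph homomorphism on the subgraph of `G` induced by `S` (local admissibility). -/
def IsHomOn (G : LGraph VG) (H : LGraph VH) (f : VG → VH) (S : Set VG) : Prop :=
  ∀ ⦃x⦄, x ∈ S → ∀ ⦃y⦄, y ∈ S → G.Adj x y → H.Adj (f x) (f y)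

/-- The configuration `α|_A` is globally admissible: it extends to a point of `Hom(G,H)`. -/
def GlobAdm (G : LGraph VG) (H : LGraph VH) (A : Set VG) (α : VG → VH) : Prop :=
  ∃ ω : VG → VH, G.IsHom H ω ∧ ∀ x ∈ A, ω x = α x

/-- A board: countable, simple, connected, locally finite, with at least two vertices. -/
structure IsBoard (G : LGraph VG) : Prop where
  countable : Countable VG
  simple : ∀ v : VG, ¬ G.Adj v v
  connected : ∀ x y : VG, ∃ n : ℕ, G.ReachIn n x y
  locallyFinite : ∀ v : VG, {w : VG | G.Adj v w}.Finite
  nontrivial : Nontrivial VG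

/-- Single-site fillability of `Hom(G, H)`. -/
def SSF (G : LGraph VG) (H : LGraph VH) : Prop :=
  ∀ (x : VG) (B : Set VG), B ⊆ {y : VG | G.Adj x y} →
    ∀ β : VG → VH, G.IsHomOn H β B →
      ∃ α : VG → VH, G.IsHomOn H α (insert x B) ∧ ∀ y ∈ B, α y = β y

/-- Topological strong spatial mixing with gap `g`. -/
def TSSM (G : LGraph VG) (H : LGraph VH) (g : ℕ) : Prop :=
  ∀ (A B S : Set VG), A.Finite → B.Finite → S.Finite → G.DistGe A B g →
    ∀ α σ β : VG → VH,
      (∃ ω, G.IsHom H ω ∧ (∀ x ∈ A, ω x = α x) ∧ (∀ x ∈ S, ω x = σ x)) →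
      (∃ ω, G.IsHom H ω ∧ (∀ x ∈ S, ω x = σ x) ∧ (∀ x ∈ B, ω x = β x)) →
      ∃ ω, G.IsHom H ω ∧ (∀ x ∈ A, ω x = α x) ∧ (∀ x ∈ S, ω x = σ x) ∧
        ∀ x ∈ B, ω x = β x

/-- Strong irreducibility with gap `g`. -/
def StrongIrred (G : LGraph VG) (H : LGraph VH) (g : ℕ) : Prop :=
  ∀ (A B : Set VG), A.Finite → B.Finite → A.Nonempty → B.Nonempty → Disjoint A B →
    G.DistGe A B g → ∀ α β : VG → VH,
      G.GlobAdm H A α → G.GlobAdm H B β →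
      ∃ ω, G.IsHom H ω ∧ (∀ x ∈ A, ω x = α x) ∧ ∀ x ∈ B, ω x = β x

end LGraph

/-- A simple graph is chordal if every cycle of length at least 4 has a chord. -/
def SimpleGraph.IsChordal {V : Type*} (G : SimpleGraph V) : Prop :=
  ∀ (v : V) (c : G.Walk v v), c.IsCycle → 4 ≤ c.length →
    ∃ u w : V, u ∈ c.support ∧ w ∈ c.support ∧ G.Adj u w ∧ s(u, w) ∉ c.edges

namespace LGraph

/-- The simple graph obtained from `G` by deleting all loops. -/
def loopless {V : Type*} (G : LGraph V) : SimpleGraph V where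
  Adj u v := u ≠ v ∧ G.Adj u v
  symm := ⟨fun u v h => ⟨Ne.symm h.1, G.symm h.2⟩⟩
  loopless := ⟨fun v h => h.1 rfl⟩

/-- The subgraph of `G` induced by a set `S` of vertices. -/
def induce {V : Type*} (G : LGraph V) (S : Set V) : LGraph S :=
  ⟨fun a b => G.Adj a.1 b.1, fun {_ _} h => G.symm h⟩

/-- A graph is loop-chordal if every vertex has a loop and its loopless version is chordal. -/
def LoopChordal {V : Type*} (G : LGraph V) : Prop :=
  (∀ v, G.Adj v v) ∧ G.loopless.IsChordal

end LGraph

namespace LGraph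

/-- The subgraph of `G` induced on `S` can be reduced by folds to a single looped vertex. -/
inductive DismOnLooped {V : Type*} [DecidableEq V] (G : LGraph V) : Finset V → Prop
  | single (v : V) (hv : G.Adj v v) : DismOnLooped G {v}
  | fold (S : Finset V) (u v : V) (hu : u ∈ S) (hv : v ∈ S) (huv : u ≠ v)
      (habsorb : ∀ w ∈ S, G.Adj u w → G.Adj v w) (hrec : DismOnLooped G (S.erase u)) :
      DismOnLooped G S

end LGraph

/-!
A chordal graph that is not complete has two non-adjacent simplicial vertices (Dirac). For
non-adjacent `a` and `b`, let `C` be the component of `b` once the closed neighbourhood of `a` is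
deleted, and `T` the set of neighbours of `a` adjacent to `C`. Two points of `T` are joined by a
path through `C`, which closes up through `a` into a cycle; chordality therefore makes `T` a
clique, and induction applied to `C ∪ T` yields a simplicial vertex inside `C`.

Once every vertex carries a loop, a simplicial vertex `u` with a neighbour `v` has
`N(u) ⊆ N(v)`, so `u` folds onto `v`. The fold maps walks to walks, so the smaller graph is still
connected, and it is still chordal, being an induced subgraph.
-/

namespace SimpleGraph

variable {V : Type*} {H : SimpleGraph V}

namespace Walk

theorem exists_length_lt_of_isChord {x y u w : V} {p : H.Walk x y} (h : p.IsChord s(u, w)) :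
    ∃ q : H.Walk x y, q.support ⊆ p.support ∧ q.length < p.length := by
  obtain ⟨hadj, he, hu, hw⟩ := isChord_sym2Mk.mp h
  obtain ⟨i, rfl, hi⟩ := mem_support_iff_exists_getVert.mp hu
  obtain ⟨j, rfl, hj⟩ := mem_support_iff_exists_getVert.mp hw
  clear h hu hw
  wlog hij : i < j generalizing i j
  · rcases (not_lt.mp hij).lt_or_eq with hji | rfl
    · exact this j hj i hi hadj.symm (by rwa [Sym2.eq_swap]) hji
    · exact absurd rfl hadj.ne
  have hij' : i + 1 < j := by
    refine lt_of_le_of_ne hij fun h => he ?_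
    subst h
    exact p.mk_mem_edges_iff_exists.mpr ⟨i, by omega, rfl⟩
  refine ⟨(p.take i).append (cons hadj (p.drop j)), ?_, ?_⟩
  · intro v hv
    rw [mem_support_append_iff, support_cons, List.mem_cons, support_take,
      drop_support_eq_support_drop_min] at hv
    rcases hv with hv | hv | hv
    · exact List.mem_of_mem_take hv
    · exact hv ▸ getVert_mem_support p i
    · exact List.mem_of_mem_drop hv
  · simp only [length_append, take_length, length_cons, drop_length]
    omega

theorem exists_isPath_isChordless {P : V → Prop} {x y : V} (p : H.Walk x y)
    (hp : ∀ v ∈ p.support, P v) :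
    ∃ q : H.Walk x y, q.IsPath ∧ q.IsChordless ∧ ∀ v ∈ q.support, P v := by
  classical
  obtain ⟨q, hqP, hmin⟩ := (InvImage.wf length wellFounded_lt).has_min
    {q : H.Walk x y | ∀ v ∈ q.support, P v} ⟨p, hp⟩
  have hbP : ∀ v ∈ q.bypass.support, P v := fun v hv =>
    hqP v (support_bypass_subset_support q hv)
  refine ⟨q.bypass, bypass_isPath q, fun e he => ?_, hbP⟩
  induction e using Sym2.ind
  obtain ⟨r, hr, hlt⟩ := exists_length_lt_of_isChord he
  exact hmin r (fun v hv => hbP v (hr hv)) (hlt.trans_le (length_bypass_le_length q))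

end Walk

def IsSimplicialIn (H : SimpleGraph V) (S : Set V) (u : V) : Prop :=
  H.IsClique (S ∩ H.neighborSet u)

namespace IsChordal

open Walk

theorem adj_of_walk_avoiding (hH : H.IsChordal) {a x y : V} (hxy : x ≠ y) (hax : H.Adj a x)
    (hay : H.Adj a y) (p : H.Walk x y) (hp : ∀ v ∈ p.support, v ≠ a ∧ (H.Adj a v → v = x ∨ v = y)) :
    H.Adj x y := by
  by_contra hnxy
  obtain ⟨q, hq, hqc, hqa⟩ := p.exists_isPath_isChordless hp
  have hlen : 2 ≤ q.length := by
    rcases q with _ | ⟨h, _ | ⟨_, _⟩⟩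
    · exact absurd rfl hxy
    · exact absurd h hnxy
    · simp
  have ha : a ∉ q.support := fun h => (hqa a h).1 rfl
  -- closing `q` up through `a` gives a cycle of length at least 4 without chords
  set c := cons hax (q.concat hay.symm) with hc
  have hcyc : c.IsCycle := by
    refine (cons_isCycle_iff _ _).mpr ⟨hq.concat ha _, fun he => ?_⟩
    rw [edges_concat, List.concat_eq_append, List.mem_append, List.mem_singleton] at he
    rcases he with he | he
    · exact ha (q.fst_mem_support_of_mem_edges he)
    · rcases Sym2.eq_iff.mp he with ⟨rfl, -⟩ | ⟨-, rfl⟩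
      · exact hay.ne rfl
      · exact hxy rfl
  have hclen : 4 ≤ c.length := by rw [hc, length_cons, length_concat]; omega
  have hsupp : ∀ v ∈ c.support, v = a ∨ v ∈ q.support := by
    simp [hc, support_concat, or_comm]
  have hqe : ∀ e ∈ q.edges, e ∈ c.edges := by simp +contextual [hc, edges_concat]
  have hae : ∀ v ∈ q.support, H.Adj a v → s(a, v) ∈ c.edges := by
    intro v hv hav
    rcases (hqa v hv).2 hav with rfl | rfl
    · simp [hc]
    · simp [hc, edges_concat, Sym2.eq_swap]
  obtain ⟨u, w, hu, hw, huw, hne⟩ := hH a c hcyc hclen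
  rcases hsupp u hu with rfl | hqu <;> rcases hsupp w hw with rfl | hqw
  · exact huw.ne rfl
  · exact hne (hae w hqw huw)
  · exact hne (Sym2.eq_swap ▸ hae u hqu huw.symm)
  · exact hne (hqe _ (hqc.mem_edges hqu hqw huw))

theorem exists_clique_separator (hH : H.IsChordal) {S : Finset V} {a b : V} (hb : b ∈ S)
    (hab : a ≠ b) (hnadj : ¬H.Adj a b) :
    ∃ S₁ : Finset V, S₁ ⊆ S ∧ a ∉ S₁ ∧ b ∈ S₁ ∧ ∃ T : Set V, b ∉ T ∧ H.IsClique T ∧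
      ∀ u ∈ S₁, u ∉ T → ¬H.Adj a u ∧ ↑S ∩ H.neighborSet u ⊆ ↑S₁ := by
  classical
  set D : V → Prop := fun v => v ∈ S ∧ v ≠ a ∧ ¬H.Adj a v
  set C : Set V := {v | ∃ p : H.Walk b v, ∀ w ∈ p.support, D w}
  set T : Set V := {v | H.Adj a v ∧ ∃ c ∈ C, H.Adj v c}
  have hCD : ∀ c ∈ C, D c := fun c ⟨p, hp⟩ => hp c p.end_mem_support
  have hCadj : ∀ c ∈ C, ∀ v, D v → H.Adj c v → v ∈ C := by
    rintro c ⟨p, hp⟩ v hv hcv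
    refine ⟨p.concat hcv, fun w hw => ?_⟩
    rw [support_concat, List.mem_append, List.mem_singleton] at hw
    exact hw.elim (hp w) (· ▸ hv)
  have hTclique : H.IsClique T := by
    rintro x ⟨hax, c₁, ⟨p₁, hp₁⟩, hxc₁⟩ y ⟨hay, c₂, ⟨p₂, hp₂⟩, hyc₂⟩ hxy
    refine hH.adj_of_walk_avoiding hxy hax hay
      (cons hxc₁ (p₁.reverse.append (p₂.concat hyc₂.symm))) fun v hv => ?_
    simp only [support_cons, List.mem_cons, mem_support_append_iff, support_reverse,
      List.mem_reverse, support_concat, List.mem_append, List.not_mem_nil, or_false] at hv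
    rcases hv with rfl | hv | hv | rfl
    · exact ⟨hax.ne', fun _ => .inl rfl⟩
    · exact ⟨(hp₁ v hv).2.1, fun h => absurd h (hp₁ v hv).2.2⟩
    · exact ⟨(hp₂ v hv).2.1, fun h => absurd h (hp₂ v hv).2.2⟩
    · exact ⟨hay.ne', fun _ => .inr rfl⟩
  refine ⟨S.filter (fun v => v ∈ C ∨ v ∈ T), Finset.filter_subset _ _, ?_, ?_,
    T, fun h => hnadj h.1, hTclique, ?_⟩
  · simp only [Finset.mem_filter, not_and, not_or]
    exact fun _ => ⟨fun h => (hCD a h).2.1 rfl, fun h => H.irrefl h.1⟩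
  · exact Finset.mem_filter.mpr ⟨hb, .inl ⟨nil, by simpa using ⟨hb, hab.symm, hnadj⟩⟩⟩
  · intro u hu huT
    have huC : u ∈ C := ((Finset.mem_filter.mp hu).2).resolve_right huT
    have hau : ¬H.Adj a u := (hCD u huC).2.2
    refine ⟨hau, fun v ⟨hvS, huv⟩ => Finset.mem_filter.mpr ⟨hvS, ?_⟩⟩
    by_cases hav : H.Adj a v
    · exact .inr ⟨hav, u, huC, huv.symm⟩
    · exact .inl (hCadj u huC v ⟨hvS, fun h => hau (h ▸ huv.symm), hav⟩ huv)

theorem isClique_or_exists_simplicial_pair (hH : H.IsChordal) (S : Finset V) :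
    H.IsClique (S : Set V) ∨ ∃ u ∈ S, ∃ w ∈ S, u ≠ w ∧ ¬H.Adj u w ∧
      H.IsSimplicialIn S u ∧ H.IsSimplicialIn S w := by
  induction S using Finset.strongInduction with
  | H S IH =>
  by_cases hS : H.IsClique (S : Set V)
  · exact .inl hS
  have away : ∀ a ∈ S, ∀ b ∈ S, a ≠ b → ¬H.Adj a b →
      ∃ u ∈ S, u ≠ a ∧ ¬H.Adj a u ∧ H.IsSimplicialIn S u := by
    intro a ha b hb hab hnadj
    obtain ⟨S₁, hS₁, haS₁, hbS₁, T, hbT, hT, hsep⟩ := hH.exists_clique_separator hb hab hnadj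
    have lift : ∀ u ∈ S₁, u ∉ T → H.IsSimplicialIn S₁ u →
        ∃ u ∈ S, u ≠ a ∧ ¬H.Adj a u ∧ H.IsSimplicialIn S u := fun u hu huT hsimp =>
      ⟨u, hS₁ hu, fun h => haS₁ (h ▸ hu), (hsep u hu huT).1,
        hsimp.subset (Set.subset_inter (hsep u hu huT).2 Set.inter_subset_right)⟩
    rcases IH S₁ ((Finset.ssubset_iff_of_subset hS₁).mpr ⟨a, ha, haS₁⟩) with
      hS₁ | ⟨u, hu, w, hw, huw, hnuw, hsu, hsw⟩
    · exact lift b hbS₁ hbT (hS₁.subset Set.inter_subset_left)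
    · by_cases huT : u ∈ T
      · by_cases hwT : w ∈ T
        · exact absurd (hT huT hwT huw) hnuw
        · exact lift w hw hwT hsw
      · exact lift u hu huT hsu
  obtain ⟨a, ha, b, hb, hab, hnadj⟩ : ∃ a ∈ S, ∃ b ∈ S, a ≠ b ∧ ¬H.Adj a b := by
    simpa [IsClique, Set.Pairwise] using hS
  obtain ⟨u, hu, hua, hau, hsu⟩ := away a ha b hb hab hnadj
  obtain ⟨w, hw, hwu, huw, hsw⟩ := away u hu a ha hua (fun h => hau h.symm)
  exact .inr ⟨u, hu, w, hw, hwu.symm, huw, hsu, hsw⟩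

theorem exists_isSimplicialIn (hH : H.IsChordal) {S : Finset V} (hS : S.Nonempty) :
    ∃ u ∈ S, H.IsSimplicialIn S u := by
  rcases hH.isClique_or_exists_simplicial_pair S with hcl | ⟨u, hu, -, -, -, -, hsu, -⟩
  · obtain ⟨u, hu⟩ := hS
    exact ⟨u, hu, hcl.subset Set.inter_subset_left⟩
  · exact ⟨u, hu, hsu⟩

end IsChordal

end SimpleGraph

namespace LGraph

variable {V : Type*} {G : LGraph V}

def IsPreconnectedOn (G : LGraph V) (S : Set V) : Prop :=
  ∀ x ∈ S, ∀ y ∈ S, Relation.ReflTransGen (fun a b => a ∈ S ∧ b ∈ S ∧ G.Adj a b) x y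

theorem ReachIn.reflTransGen :
    ∀ {n : ℕ} {x y : V}, G.ReachIn n x y → Relation.ReflTransGen G.Adj x y
  | 0, _, _, h => h ▸ .refl
  | _ + 1, _, _, ⟨_, hxz, hzy⟩ => .head hxz (reflTransGen hzy)

theorem isPreconnectedOn_univ (hconn : ∀ x y : V, ∃ n, G.ReachIn n x y) :
    G.IsPreconnectedOn Set.univ := by
  intro x _ y _
  obtain ⟨n, h⟩ := hconn x y
  exact Relation.ReflTransGen.mono (fun _ _ hab => ⟨trivial, trivial, hab⟩) x y h.reflTransGen

theorem IsPreconnectedOn.exists_adj_ne {S : Set V} {x y : V} (hS : G.IsPreconnectedOn S)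
    (hx : x ∈ S) (hy : y ∈ S) (hxy : x ≠ y) : ∃ v ∈ S, x ≠ v ∧ G.Adj x v := by
  induction hS x hx y hy using Relation.ReflTransGen.head_induction_on with
  | refl => exact absurd rfl hxy
  | @head x z hxz _ ih =>
    by_cases hzx : z = x
    · subst hzx
      exact ih hxz.1 hxy
    · exact ⟨z, hxz.2.1, Ne.symm hzx, hxz.2.2⟩

theorem IsPreconnectedOn.diff_singleton {S : Set V} {u v : V} (hS : G.IsPreconnectedOn S)
    (hv : v ∈ S) (huv : u ≠ v) (hvv : G.Adj v v) (habsorb : ∀ w ∈ S, G.Adj u w → G.Adj v w) :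
    G.IsPreconnectedOn (S \ {u}) := by
  classical
  set f : V → V := fun w => if w = u then v else w
  have hf : ∀ w ∈ S, f w ∈ S \ {u} := by
    intro w hw
    by_cases hwu : w = u <;> simp [f, hwu, hv, hw, huv.symm]
  have hadj : ∀ a ∈ S, ∀ b ∈ S, G.Adj a b → G.Adj (f a) (f b) := by
    intro a ha b hb hab
    by_cases hau : a = u <;> by_cases hbu : b = u <;> simp only [f, hau, hbu, if_true, if_false]
    · exact hvv
    · exact habsorb b hb (hau ▸ hab)
    · exact G.symm (habsorb a ha (G.symm (hbu ▸ hab)))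
    · exact hab
  intro x hx y hy
  have hfx : ∀ w ∈ S \ {u}, f w = w := fun w hw => if_neg hw.2
  rw [← hfx x hx, ← hfx y hy]
  exact (hS x hx.1 y hy.1).lift f fun a b ⟨ha, hb, hab⟩ => ⟨hf a ha, hf b hb, hadj a ha b hb hab⟩

theorem adj_of_isSimplicialIn {S : Set V} {u v : V} (hvv : G.Adj v v)
    (hsimp : G.loopless.IsSimplicialIn S u) (hv : v ∈ S) (huv : u ≠ v) (hadj : G.Adj u v) :
    ∀ w ∈ S, G.Adj u w → G.Adj v w := by
  intro w hw huw
  by_cases hwv : w = v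
  · exact hwv ▸ hvv
  by_cases hwu : w = u
  · exact hwu ▸ G.symm hadj
  exact (hsimp ⟨hv, huv, hadj⟩ ⟨hw, Ne.symm hwu, huw⟩ (Ne.symm hwv)).2

theorem dismOnLooped_of_isPreconnectedOn [DecidableEq V] (hG : G.LoopChordal) {S : Finset V}
    (hS : S.Nonempty) (hconn : G.IsPreconnectedOn S) : G.DismOnLooped S := by
  induction S using Finset.strongInduction with
  | H S IH =>
  obtain ⟨u, huS, hsimp⟩ := hG.2.exists_isSimplicialIn hS
  obtain ⟨w, rfl⟩ | hnt := hS.exists_eq_singleton_or_nontrivial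
  · exact .single w (hG.1 w)
  obtain ⟨y, hyS, hyu⟩ := hnt.exists_ne u
  obtain ⟨v, hvS, huv, hadj⟩ := hconn.exists_adj_ne huS hyS (Ne.symm hyu)
  have habsorb := adj_of_isSimplicialIn (hG.1 v) hsimp hvS huv hadj
  refine .fold S u v huS hvS huv habsorb (IH _ (Finset.erase_ssubset huS)
    ⟨v, Finset.mem_erase.mpr ⟨huv.symm, hvS⟩⟩ ?_)
  rw [Finset.coe_erase]
  exact hconn.diff_singleton hvS huv (hG.1 v) habsorb

end LGraph

/-- Every connected loop-chordal graph is dismantlable: a sequence of folds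
reduces it to a single looped vertex. -/
theorem loopChordal_connected_dismantlable {V : Type} [Fintype V] [DecidableEq V] [Nonempty V]
    (G : LGraph V) (hconn : ∀ x y : V, ∃ n : ℕ, G.ReachIn n x y)
    (hlc : G.LoopChordal) :
    G.DismOnLooped Finset.univ :=
  LGraph.dismOnLooped_of_isPreconnectedOn hlc Finset.univ_nonempty
    (by simpa using LGraph.isPreconnectedOn_univ hconn)
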